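/- Let N ≥ 2, 1 < q ≤ (2N-1)/(2(N-1)), a = N(q-1), b > 0. Then g(t) := ((1+t)^{1/b} - 1)(1+t)^{1 - (q-1)(N-1)/b} / t > 1/b for all t > 0, i.e., the infimum inf_{t>0} g(t) = 1/b is not attained. -/

import Mathlib

open Real Filter Topology Set

/-!
With `s = 1/b` and `r = 1 - (q-1)(N-1)/b`, the claim `g t > s` is `φ t > 0` for
`φ t = (1+t)^(s+r) - (1+t)^r - s t`. Here `φ 0 = φ' 0 = 0`, and `φ'' > 0` on `(0, ∞)` because
`s + r ≥ 1` and `(s+r)(s+r-1) - r(r-1) = s(s+2r-1) > 0`; both conditions follow from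
`(q-1)(N-1) ≤ 1/2`. Since `g t → s` as `t → 0⁺`, the infimum `s` is approached but never
attained.
-/

lemma pos_of_hasDerivAt_of_deriv_pos {f f' : ℝ → ℝ} {a : ℝ}
    (hf : ∀ x, a ≤ x → HasDerivAt f (f' x) x) (hfa : f a = 0)
    (hf' : ∀ x, a < x → 0 < f' x) {x : ℝ} (hx : a < x) : 0 < f x := by
  have hmono : StrictMonoOn f (Ici a) := by
    refine strictMonoOn_of_hasDerivWithinAt_pos (f' := f') (convex_Ici a)
      (fun y hy => (hf y hy).continuousAt.continuousWithinAt) (fun y hy => ?_) (fun y hy => ?_)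
    · rw [interior_Ici] at hy
      exact (hf y hy.le).hasDerivWithinAt
    · rw [interior_Ici] at hy
      exact hf' y hy
  simpa [hfa] using hmono self_mem_Ici hx.le hx

lemma hasDerivAt_one_add_rpow (e : ℝ) {t : ℝ} (ht : -1 < t) :
    HasDerivAt (fun s : ℝ => (1 + s) ^ e) (e * (1 + t) ^ (e - 1)) t := by
  simpa using ((hasDerivAt_id t).const_add 1).rpow_const (p := e) (Or.inl (by simp; linarith))

lemma sub_mul_lt_one_add_rpow_sub_rpow {p r t : ℝ} (hrp : r < p) (hp : 1 ≤ p) (hpr : 1 < p + r)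
    (ht : 0 < t) : (p - r) * t < (1 + t) ^ p - (1 + t) ^ r := by
  have hφ' : ∀ x, 0 ≤ x →
      HasDerivAt (fun s => p * (1 + s) ^ (p - 1) - r * (1 + s) ^ (r - 1) - (p - r))
      (p * (p - 1) * (1 + x) ^ (p - 2) - r * (r - 1) * (1 + x) ^ (r - 2)) x := by
    intro x hx
    refine (((hasDerivAt_one_add_rpow (p - 1) (by linarith)).const_mul p).sub
      ((hasDerivAt_one_add_rpow (r - 1) (by linarith)).const_mul r)).sub_const (p - r)
      |>.congr_deriv ?_
    rw [show p - 1 - 1 = p - 2 by ring, show r - 1 - 1 = r - 2 by ring]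
    ring
  have hφ'' : ∀ x, 0 < x →
      0 < p * (p - 1) * (1 + x) ^ (p - 2) - r * (r - 1) * (1 + x) ^ (r - 2) := by
    intro x hx
    have hpow : (1 + x) ^ (r - 2) ≤ (1 + x) ^ (p - 2) :=
      rpow_le_rpow_of_exponent_le (by linarith) (by linarith)
    have hcoef : r * (r - 1) < p * (p - 1) := by nlinarith
    have := mul_le_mul_of_nonneg_left hpow (by nlinarith : 0 ≤ p * (p - 1))
    nlinarith [rpow_pos_of_pos (by linarith : (0 : ℝ) < 1 + x) (r - 2)]
  have hφ : ∀ x, 0 ≤ x → HasDerivAt (fun s => (1 + s) ^ p - (1 + s) ^ r - (p - r) * s)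
      (p * (1 + x) ^ (p - 1) - r * (1 + x) ^ (r - 1) - (p - r)) x := fun x hx =>
    ((hasDerivAt_one_add_rpow p (by linarith)).sub (hasDerivAt_one_add_rpow r (by linarith))).sub
      ((hasDerivAt_id x).const_mul (p - r)) |>.congr_deriv (by ring)
  have := pos_of_hasDerivAt_of_deriv_pos hφ (by simp)
    (fun x hx => pos_of_hasDerivAt_of_deriv_pos hφ' (by simp) hφ'' hx) ht
  linarith

lemma lt_rpow_sub_one_mul_rpow_div {s r t : ℝ} (hs : 0 < s) (hsr : 1 ≤ s + r)
    (hsr' : 1 < s + 2 * r) (ht : 0 < t) :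
    s < ((1 + t) ^ s - 1) * (1 + t) ^ r / t := by
  have h := sub_mul_lt_one_add_rpow_sub_rpow (p := s + r) (r := r) (by linarith) hsr
    (by linarith) ht
  rw [rpow_add (by linarith)] at h
  rw [lt_div_iff₀ ht]
  linarith

lemma tendsto_rpow_sub_one_mul_rpow_div (s r : ℝ) :
    Tendsto (fun t : ℝ => ((1 + t) ^ s - 1) * (1 + t) ^ r / t) (𝓝[>] 0) (𝓝 s) := by
  have hslope : Tendsto (fun t : ℝ => ((1 + t) ^ s - 1) / t) (𝓝[>] 0) (𝓝 s) := by
    have := (hasDerivAt_one_add_rpow s (by norm_num : (-1 : ℝ) < 0)).tendsto_slope_zero_right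
    simpa [inv_mul_eq_div] using this
  have hcont : Tendsto (fun t : ℝ => (1 + t) ^ r) (𝓝[>] 0) (𝓝 1) := by
    have : ContinuousAt (fun t : ℝ => (1 + t) ^ r) 0 :=
      (continuousAt_const.add continuousAt_id).rpow_const (Or.inl (by norm_num))
    simpa using this.tendsto.mono_left nhdsWithin_le_nhds
  simpa [mul_div_right_comm] using hslope.mul hcont

lemma sInf_eq_of_forall_gt_of_tendsto {g : ℝ → ℝ} {m : ℝ} (hgt : ∀ t, 0 < t → m < g t)
    (hlim : Tendsto g (𝓝[>] 0) (𝓝 m)) : sInf {x | ∃ t, 0 < t ∧ x = g t} = m := by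
  refine IsGLB.csInf_eq ⟨?_, fun y hy => ?_⟩ ⟨g 1, 1, one_pos, rfl⟩
  · rintro _ ⟨t, ht, rfl⟩
    exact (hgt t ht).le
  · refine ge_of_tendsto hlim ?_
    filter_upwards [self_mem_nhdsWithin] with t ht
    exact hy ⟨t, ht, rfl⟩

theorem g_gt_inv_b_small_q_general (N : ℕ) (hN : 2 ≤ N) (q b : ℝ)
    (hq2 : q ≤ (2*(N:ℝ)-1) / (2*((N:ℝ)-1))) (hb : 0 < b) :
    (∀ t : ℝ, 0 < t →
      ((1+t) ^ (1/b) - 1) * (1+t) ^ (1 - (q-1)*((N:ℝ)-1)/b) / t > 1/b) ∧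
    sInf { r | ∃ t : ℝ, 0 < t ∧
        r = ((1+t) ^ (1/b) - 1) * (1+t) ^ (1 - (q-1)*((N:ℝ)-1)/b) / t } = 1/b ∧
    ¬ ∃ t : ℝ, 0 < t ∧
        ((1+t) ^ (1/b) - 1) * (1+t) ^ (1 - (q-1)*((N:ℝ)-1)/b) / t =
          sInf { r | ∃ t : ℝ, 0 < t ∧
            r = ((1+t) ^ (1/b) - 1) * (1+t) ^ (1 - (q-1)*((N:ℝ)-1)/b) / t } := by
  have hN' : (1 : ℝ) < N := by exact_mod_cast hN
  set c := (q - 1) * ((N:ℝ) - 1)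
  have hc : c ≤ 1 / 2 := by
    rw [le_div_iff₀ (by linarith)] at hq2
    linarith
  have hsr : 1/b + (1 - c/b) = 1 + (1 - c)/b := by ring
  have hsr' : 1/b + 2 * (1 - c/b) = 2 + (1 - 2*c)/b := by ring
  have hgt : ∀ t : ℝ, 0 < t → 1/b < ((1+t) ^ (1/b) - 1) * (1+t) ^ (1 - c/b) / t :=
    fun t ht => lt_rpow_sub_one_mul_rpow_div (by positivity)
      (by rw [hsr]; linarith [div_nonneg (by linarith : 0 ≤ 1 - c) hb.le])
      (by rw [hsr']; linarith [div_nonneg (by linarith : 0 ≤ 1 - 2*c) hb.le]) ht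
  have hinf := sInf_eq_of_forall_gt_of_tendsto hgt (tendsto_rpow_sub_one_mul_rpow_div _ _)
  refine ⟨hgt, hinf, ?_⟩
  rintro ⟨t, ht, heq⟩
  exact (hgt t ht).ne' (heq.trans hinf)

/-- for `1 < q ≤ (2N-1)/(2(N-1))` and `a = N(q-1)`,
`g(t) > 1/b` for all `t > 0`; the infimum `1/b` is not attained. -/
theorem g_gt_inv_b_small_q (N : ℕ) (hN : 2 ≤ N) (q b : ℝ) (hq1 : 1 < q)
    (hq2 : q ≤ (2*(N:ℝ)-1) / (2*((N:ℝ)-1))) (hb : 0 < b) :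
    (∀ t : ℝ, 0 < t →
      ((1+t) ^ (1/b) - 1) * (1+t) ^ (1 - (q-1)*((N:ℝ)-1)/b) / t > 1/b) ∧
    sInf { r | ∃ t : ℝ, 0 < t ∧
        r = ((1+t) ^ (1/b) - 1) * (1+t) ^ (1 - (q-1)*((N:ℝ)-1)/b) / t } = 1/b ∧
    ¬ ∃ t : ℝ, 0 < t ∧
        ((1+t) ^ (1/b) - 1) * (1+t) ^ (1 - (q-1)*((N:ℝ)-1)/b) / t =
          sInf { r | ∃ t : ℝ, 0 < t ∧
            r = ((1+t) ^ (1/b) - 1) * (1+t) ^ (1 - (q-1)*((N:ℝ)-1)/b) / t } :=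
  g_gt_inv_b_small_q_general N hN q b hq2 hb
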